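/- arXiv:2306.00460 — 4 statements merged into one kernel-verified Lean document; each statement's English description precedes it below -/
import Mathlib

section
/- Fix σ < 1/2 and suppose there exist constants c > 0 and ε ∈ (0, 1/2 − σ) such that |ζ(σ+it)| > c·|t|^{1/2−σ−ε} for all |t| ≥ 2. Then the set {ζ(σ+it) : t ∈ ℝ} is nowhere dense in ℂ. -/
/-!
The hypothesis makes `t ↦ ζ(σ + it)` tend to infinity as `|t| → ∞`, so as a continuous map
`ℝ → ℂ` it is proper and its image is closed. Being `C¹`, it has an image of Hausdorff
dimension at most `1 < 2 = dim ℂ`, so the image has dense complement.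
-/

open Complex Filter Set Bornology

theorem tendsto_cobounded_of_rpow_lt_norm {E : Type*} [SeminormedAddCommGroup E] {f : ℝ → E}
    {c α T : ℝ} (hc : 0 < c) (hα : 0 < α) (h : ∀ t : ℝ, T ≤ |t| → c * |t| ^ α < ‖f t‖) :
    Tendsto f (cocompact ℝ) (cobounded E) := by
  have habs : Tendsto (fun t : ℝ => |t|) (cocompact ℝ) atTop := tendsto_norm_cocompact_atTop
  rw [← tendsto_norm_atTop_iff_cobounded]
  refine tendsto_atTop_mono' _ ?_ (((tendsto_rpow_atTop hα).comp habs).const_mul_atTop hc)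
  filter_upwards [habs.eventually_ge_atTop T] with t ht using (h t ht).le

theorem isProperMap_of_tendsto_cobounded {X E : Type*} [TopologicalSpace X]
    [MetricSpace E] [ProperSpace E] {f : X → E} (hf : Continuous f)
    (h : Tendsto f (cocompact X) (cobounded E)) : IsProperMap f :=
  isProperMap_iff_tendsto_cocompact.2 ⟨hf, Metric.cobounded_eq_cocompact (α := E) ▸ h⟩

theorem contDiff_riemannZeta_vertical {σ : ℝ} (hσ : σ ≠ 1) {n : WithTop ℕ∞} :
    ContDiff ℝ n (fun t : ℝ => riemannZeta (σ + I * t)) := by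
  have hline : ContDiff ℝ n (fun t : ℝ => (σ : ℂ) + I * t) :=
    contDiff_const.add (contDiff_const.mul ofRealCLM.contDiff)
  refine contDiff_iff_contDiffAt.2 fun t => ?_
  have hne : (σ : ℂ) + I * t ≠ 1 := fun h => hσ (by simpa using congrArg re h)
  exact ((analyticOn_riemannZeta _ hne).contDiffAt.restrict_scalars ℝ).comp t hline.contDiffAt

theorem zeta_vertical_line_nowhere_dense_general (σ : ℝ) (hσ : σ < 1/2)
    (c ε : ℝ) (hc : 0 < c) (hεσ : ε < 1/2 - σ)
    (hlower : ∀ t : ℝ, 2 ≤ |t| →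
      c * |t| ^ (1/2 - σ - ε) < ‖riemannZeta (σ + Complex.I * (t:ℂ))‖) :
    interior (closure {z : ℂ | ∃ t : ℝ, z = riemannZeta (σ + Complex.I * (t:ℂ))}) = ∅ := by
  have hsmooth : ContDiff ℝ 1 (fun t : ℝ => riemannZeta (σ + I * t)) :=
    contDiff_riemannZeta_vertical (by linarith)
  have hproper : IsProperMap (fun t : ℝ => riemannZeta (σ + I * t)) :=
    isProperMap_of_tendsto_cobounded hsmooth.continuous
      (tendsto_cobounded_of_rpow_lt_norm hc (by linarith) hlower)
  have himage : {z : ℂ | ∃ t : ℝ, z = riemannZeta (σ + I * t)} =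
      range (fun t : ℝ => riemannZeta (σ + I * t)) := by
    ext z
    exact exists_congr fun _ => eq_comm
  rw [himage, hproper.isClosed_range.closure_eq, interior_eq_empty_iff_dense_compl]
  exact hsmooth.dense_compl_range_of_finrank_lt_finrank (by simp)

/-- if σ < 1/2 and |ζ(σ+it)| > c|t|^{1/2−σ−ε} for |t| ≥ 2, then the image
of the vertical line Re s = σ under ζ is nowhere dense in ℂ. -/
theorem zeta_vertical_line_nowhere_dense (σ : ℝ) (hσ : σ < 1/2)
    (c ε : ℝ) (hc : 0 < c) (hε : 0 < ε) (hεσ : ε < 1/2 - σ)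
    (hlower : ∀ t : ℝ, 2 ≤ |t| →
      c * |t| ^ (1/2 - σ - ε) < ‖riemannZeta (σ + Complex.I * (t:ℂ))‖) :
    interior (closure {z : ℂ | ∃ t : ℝ, z = riemannZeta (σ + Complex.I * (t:ℂ))}) = ∅ :=
  zeta_vertical_line_nowhere_dense_general σ hσ c ε hc hεσ hlower
end

section
/- Let f be holomorphic on a neighborhood of the closed disk D̄(α'+it₀, 2ε), with a zero of order m at α'+it₀ and no other zeros in D̄(α'+it₀, 2ε). Then the one-sided derivatives at σ = α' of the function σ ↦ ∫_{t₀−ε}^{t₀+ε} log|f(σ+it)| dt exist and equal ±mπ + ∫_{t₀−ε}^{t₀+ε} Re(f'(α'+it)/f(α'+it)) dt (with + for the right derivative and − for the left derivative), where the integral is understood as a convergent improper integral. -/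
/-!
On the disk, `log ‖f (σ + I t)‖ = (m / 2) log ((σ - α')² + (t - t₀)²) + log ‖g (σ + I t)‖` for
`t ≠ t₀`. The `g`-term is differentiable in `σ` under the integral, with derivative
`∫ Re (g'/g)`, and on the line `σ = α'` this equals `∫ Re (f'/f)` because
`f'/f = m / (s - s₀) + g'/g` and `m / (s - s₀)` is purely imaginary there. The first term
integrates in closed form to `2ε log (x² + ε²) - 4ε + 4x arctan (ε / x)` with `x = σ - α'`,
whose one-sided derivatives at `x = 0` are `±2π` since `arctan (ε / x) → ±π/2`.
-/

open Real MeasureTheory Set Filter Topology Interval intervalIntegral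
open Complex (I)

theorem integral_log_sq_add_sq (x c : ℝ) :
    ∫ u in (-c)..c, log (x ^ 2 + u ^ 2) =
      2 * c * log (x ^ 2 + c ^ 2) - 4 * c + 4 * x * arctan (c / x) := by
  rcases eq_or_ne x 0 with rfl | hx
  -- the junk value `c / 0 = 0` kills the `arctan` term
  · simp only [ne_eq, OfNat.ofNat_ne_zero, not_false_eq_true, zero_pow, zero_add, Real.log_pow,
      intervalIntegral.integral_const_mul, integral_log, log_neg_eq_log, Nat.cast_ofNat, mul_zero,
      zero_mul, add_zero]
    ring
  · have hpos : ∀ u : ℝ, 0 < x ^ 2 + u ^ 2 := fun u => by positivity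
    have hF : ∀ u : ℝ, HasDerivAt
        (fun u : ℝ => u * log (x ^ 2 + u ^ 2) - 2 * u + 2 * x * arctan (u / x))
        (log (x ^ 2 + u ^ 2)) u := fun u => by
      have hq : HasDerivAt (fun u : ℝ => x ^ 2 + u ^ 2) (2 * u) u := by
        simpa using ((hasDerivAt_id u).pow 2).const_add (x ^ 2)
      refine ((((hasDerivAt_id' u).mul (hq.log (hpos u).ne')).sub
        ((hasDerivAt_id' u).const_mul 2)).add
        (((hasDerivAt_id' u).div_const x).arctan.const_mul (2 * x))).congr_deriv ?_
      field_simp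
      ring
    have hcont : Continuous fun u : ℝ => log (x ^ 2 + u ^ 2) :=
      continuous_const.add (continuous_pow 2) |>.log fun u => (hpos u).ne'
    rw [integral_eq_sub_of_hasDerivAt (fun u _ => hF u) (hcont.intervalIntegrable _ _), neg_sq,
      neg_div, arctan_neg]
    ring

theorem hasDerivWithinAt_mul_arctan_div_Ici {c : ℝ} (hc : 0 < c) :
    HasDerivWithinAt (fun x : ℝ => x * arctan (c / x)) (π / 2) (Ici 0) 0 := by
  refine .Ici_of_Ioi <| (hasDerivWithinAt_iff_tendsto_slope' (lt_irrefl 0)).2 ?_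
  have : Tendsto (fun x : ℝ => c / x) (𝓝[>] 0) atTop := by
    simpa [div_eq_mul_inv] using tendsto_inv_nhdsGT_zero.const_mul_atTop hc
  refine (tendsto_nhds_of_tendsto_nhdsWithin tendsto_arctan_atTop).comp this |>.congr' ?_
  filter_upwards [self_mem_nhdsWithin] with x (hx : 0 < x)
  simp [slope_def_field, hx.ne']

theorem hasDerivWithinAt_mul_arctan_div_Iic {c : ℝ} (hc : 0 < c) :
    HasDerivWithinAt (fun x : ℝ => x * arctan (c / x)) (-(π / 2)) (Iic 0) 0 := by
  refine HasDerivWithinAt.Iic_of_Iio ((hasDerivWithinAt_iff_tendsto_slope' self_notMem_Iio).2 ?_)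
  have : Tendsto (fun x : ℝ => c / x) (𝓝[<] 0) atBot := by
    simpa [div_eq_mul_inv] using tendsto_inv_nhdsLT_zero.const_mul_atBot hc
  refine (tendsto_nhds_of_tendsto_nhdsWithin tendsto_arctan_atBot).comp this |>.congr' ?_
  filter_upwards [self_mem_nhdsWithin] with x (hx : x < 0)
  simp [slope_def_field, hx.ne]

theorem hasDerivWithinAt_integral_log_sq_add_sq {a c d : ℝ} {s t : Set ℝ} (hc : c ≠ 0)
    (hd : HasDerivWithinAt (fun x : ℝ => x * arctan (c / x)) d s 0) (hts : MapsTo (· - a) t s) :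
    HasDerivWithinAt (fun σ => ∫ u in (-c)..c, log ((σ - a) ^ 2 + u ^ 2)) (4 * d) t a := by
  simp_rw [integral_log_sq_add_sq]
  have hq : HasDerivAt (fun x : ℝ => x ^ 2 + c ^ 2) 0 0 := by
    simpa using (hasDerivAt_pow 2 (0 : ℝ)).add_const (c ^ 2)
  have hlog : HasDerivAt (fun x : ℝ => 2 * c * log (x ^ 2 + c ^ 2) - 4 * c) 0 0 := by
    simpa using ((hq.log (by positivity)).const_mul (2 * c)).sub_const (4 * c)
  have := (hlog.hasDerivWithinAt.add (hd.const_mul 4)).comp_of_eq a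
    ((hasDerivAt_id' a).sub_const a).hasDerivWithinAt hts (sub_self a).symm
  simpa [Function.comp_def, mul_assoc] using this

theorem ofReal_add_I_mul_mem_reProdIm {x t : ℝ} {s u : Set ℝ} :
    (x : ℂ) + I * t ∈ s ×ℂ u ↔ x ∈ s ∧ t ∈ u := by
  simp [Complex.mem_reProdIm]

theorem reProdIm_Icc_subset_closedBall (x y r : ℝ) :
    Icc (x - r) (x + r) ×ℂ Icc (y - r) (y + r) ⊆ Metric.closedBall (x + I * y) (2 * r) := by
  intro z hz
  rw [Complex.mem_reProdIm, mem_Icc, mem_Icc] at hz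
  rw [Metric.mem_closedBall, Complex.dist_eq]
  refine (Complex.norm_le_abs_re_add_abs_im _).trans ?_
  have hre : |z.re - x| ≤ r := abs_le.2 ⟨by linarith, by linarith⟩
  have him : |z.im - y| ≤ r := abs_le.2 ⟨by linarith, by linarith⟩
  simpa [two_mul] using add_le_add hre him

theorem integral_log_norm_ofReal_add_I_mul_sub (σ α' t₀ c : ℝ) :
    ∫ t in (t₀ - c)..(t₀ + c), log ‖(σ : ℂ) + I * t - (α' + I * t₀)‖ =
      (∫ u in (-c)..c, log ((σ - α') ^ 2 + u ^ 2)) / 2 := by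
  have hnorm : ∀ t : ℝ, log ‖(σ : ℂ) + I * t - (α' + I * t₀)‖ =
      log ((σ - α') ^ 2 + (t - t₀) ^ 2) / 2 := fun t => by
    have : (σ : ℂ) + I * t - (α' + I * t₀) = ((σ - α' : ℝ) : ℂ) + ((t - t₀ : ℝ) : ℂ) * I := by
      push_cast; ring
    rw [this, Complex.norm_add_mul_I, Real.log_sqrt (by positivity)]
  simp_rw [hnorm, intervalIntegral.integral_div,
    intervalIntegral.integral_comp_sub_right (fun t => log ((σ - α') ^ 2 + t ^ 2))]
  ring_nf

theorem integral_log_norm_vertical_eq {f g : ℂ → ℂ} {s₀ : ℂ} {m : ℕ} {σ a b : ℝ}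
    (hfac : ∀ t ∈ [[a, b]], f (σ + I * t) = (σ + I * t - s₀) ^ m * g (σ + I * t))
    (hgc : ContinuousOn (fun t : ℝ => g (σ + I * t)) [[a, b]])
    (hgne : ∀ t ∈ [[a, b]], g (σ + I * t) ≠ 0) :
    ∫ t in a..b, log ‖f (σ + I * t)‖ =
      m * (∫ t in a..b, log ‖(σ : ℂ) + I * t - s₀‖) + ∫ t in a..b, log ‖g (σ + I * t)‖ := by
  have hline : AnalyticOnNhd ℝ (fun t : ℝ => (σ : ℂ) + I * t - s₀) [[a, b]] := fun t _ =>
    (analyticAt_const.add (analyticAt_const.mul (Complex.ofRealCLM.analyticAt t))).sub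
      analyticAt_const
  have hzero : ∀ᵐ t : ℝ, (σ : ℂ) + I * t - s₀ ≠ 0 := by
    filter_upwards [Measure.ae_ne volume s₀.im] with t ht hzero
    exact ht (by simpa using congrArg Complex.im (sub_eq_zero.1 hzero))
  rw [← intervalIntegral.integral_const_mul, ← intervalIntegral.integral_add
    (hline.meromorphicOn.intervalIntegrable_log_norm.const_mul _)
    (hgc.norm.log fun t ht => norm_ne_zero_iff.2 (hgne t ht)).intervalIntegrable]
  refine integral_congr_ae ?_
  filter_upwards [hzero] with t ht htab
  rw [hfac t (uIoc_subset_uIcc htab), norm_mul, norm_pow, Real.log_mul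
    (pow_ne_zero _ (norm_ne_zero_iff.2 ht)) (norm_ne_zero_iff.2 (hgne t (uIoc_subset_uIcc htab))),
    Real.log_pow]

theorem HasDerivAt.log_norm {w : ℝ → ℂ} {w' : ℂ} {x : ℝ} (hw : HasDerivAt w w' x)
    (hx : w x ≠ 0) : HasDerivAt (fun y => Real.log ‖w y‖) (w' / w x).re x := by
  have hsq : (fun y => Real.log ‖w y‖) = fun y => Real.log (‖w y‖ ^ 2) / 2 := by
    ext y
    rw [Real.log_pow]
    ring
  rw [hsq]
  refine ((hw.norm_sq.log (by simpa using hx)).div_const 2).congr_deriv ?_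
  rw [Complex.inner, Complex.div_re, ← Complex.normSq_eq_norm_sq]
  simp only [Complex.mul_re, Complex.conj_re, Complex.conj_im]
  field_simp
  ring

theorem hasDerivAt_integral_log_norm_vertical {g : ℂ → ℂ} {U : Set ℂ} {σ₀ δ a b : ℝ}
    (hU : IsOpen U) (hg : DifferentiableOn ℂ g U) (hδ : 0 < δ)
    (hRU : Icc (σ₀ - δ) (σ₀ + δ) ×ℂ [[a, b]] ⊆ U)
    (hne : ∀ z ∈ Icc (σ₀ - δ) (σ₀ + δ) ×ℂ [[a, b]], g z ≠ 0) :
    HasDerivAt (fun σ : ℝ => ∫ t in a..b, log ‖g (σ + I * t)‖)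
      (∫ t in a..b, (logDeriv g (σ₀ + I * t)).re) σ₀ := by
  set R := Icc (σ₀ - δ) (σ₀ + δ) ×ℂ [[a, b]]
  have hmem : ∀ x ∈ Icc (σ₀ - δ) (σ₀ + δ), ∀ t ∈ [[a, b]], (x : ℂ) + I * t ∈ R :=
    fun x hx t ht => ofReal_add_I_mul_mem_reProdIm.2 ⟨hx, ht⟩
  have hline : ∀ x : ℝ, Continuous fun t : ℝ => (x : ℂ) + I * t := fun x => by fun_prop
  have hlog_cont : ∀ x ∈ Icc (σ₀ - δ) (σ₀ + δ),
      ContinuousOn (fun t : ℝ => log ‖g (x + I * t)‖) [[a, b]] := fun x hx =>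
    ((hg.continuousOn.mono hRU).comp (hline x).continuousOn (hmem x hx)).norm.log
      fun t ht => norm_ne_zero_iff.2 (hne _ (hmem x hx t ht))
  have hlogDeriv_cont : ContinuousOn (logDeriv g) R :=
    ((hg.analyticOnNhd hU).deriv.continuousOn.mono hRU).div (hg.continuousOn.mono hRU) hne
  obtain ⟨C, hC⟩ := (isCompact_Icc.reProdIm isCompact_uIcc).exists_bound_of_continuousOn
    hlogDeriv_cont
  have hnhds : Icc (σ₀ - δ) (σ₀ + δ) ∈ 𝓝 σ₀ := Icc_mem_nhds (by linarith) (by linarith)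
  refine (intervalIntegral.hasDerivAt_integral_of_dominated_loc_of_deriv_le (bound := fun _ => C)
    (F' := fun (x t : ℝ) => (logDeriv g (x + I * t)).re)
    hnhds ?_ ?_ ?_ ?_ intervalIntegrable_const ?_).2
  · filter_upwards [hnhds] with x hx
    exact ((hlog_cont x hx).mono uIoc_subset_uIcc).aestronglyMeasurable measurableSet_uIoc
  · exact (hlog_cont σ₀ (mem_of_mem_nhds hnhds)).intervalIntegrable
  · exact ((Complex.continuous_re.comp_continuousOn (hlogDeriv_cont.comp (hline σ₀).continuousOn
      (hmem σ₀ (mem_of_mem_nhds hnhds)))).mono uIoc_subset_uIcc).aestronglyMeasurable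
      measurableSet_uIoc
  · refine .of_forall fun t ht x hx => ?_
    exact (Complex.abs_re_le_norm _).trans (hC _ (hmem x hx t (uIoc_subset_uIcc ht)))
  · refine .of_forall fun t ht x hx => ?_
    have hz := hmem x hx t (uIoc_subset_uIcc ht)
    have hgz : HasDerivAt g (deriv g (x + I * t)) (x + I * t) :=
      (hg.differentiableAt (hU.mem_nhds (hRU hz))).hasDerivAt
    simpa [logDeriv_apply] using
      (hgz.comp_add_const (x : ℂ) (I * t)).comp_ofReal.log_norm (hne _ hz)

theorem logDeriv_eq_div_sub_add_of_eventuallyEq {f g : ℂ → ℂ} {s₀ z : ℂ} {m : ℕ}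
    (hfg : f =ᶠ[𝓝 z] fun s => (s - s₀) ^ m * g s) (hz : z ≠ s₀) (hgz : g z ≠ 0)
    (hg : DifferentiableAt ℂ g z) : logDeriv f z = m / (z - s₀) + logDeriv g z := by
  rw [(logDeriv_congr_nhds hfg).eq_of_nhds, logDeriv_mul (f := fun s => (s - s₀) ^ m) z
    (pow_ne_zero _ (sub_ne_zero.2 hz)) hgz (by fun_prop) hg, logDeriv_fun_pow (by fun_prop)]
  simp [logDeriv_apply, div_eq_mul_inv]

theorem re_logDeriv_ofReal_add_I_mul_eq {f g : ℂ → ℂ} {m : ℕ} {α' t t₀ : ℝ}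
    (hfg : f =ᶠ[𝓝 (α' + I * t)] fun s => (s - (α' + I * t₀)) ^ m * g s) (ht : t ≠ t₀)
    (hgz : g (α' + I * t) ≠ 0) (hg : DifferentiableAt ℂ g (α' + I * t)) :
    (logDeriv f (α' + I * t)).re = (logDeriv g (α' + I * t)).re := by
  have hsub : (α' : ℂ) + I * t - (α' + I * t₀) = I * ((t - t₀ : ℝ) : ℂ) := by push_cast; ring
  have hne : (α' : ℂ) + I * t ≠ α' + I * t₀ := by
    rw [← sub_ne_zero, hsub]
    exact mul_ne_zero Complex.I_ne_zero (Complex.ofReal_ne_zero.2 (sub_ne_zero.2 ht))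
  rw [logDeriv_eq_div_sub_add_of_eventuallyEq hfg hne hgz hg, Complex.add_re, hsub]
  simp [Complex.div_re]

section Factorization

variable {f g : ℂ → ℂ} {α' t₀ ε : ℝ} {m : ℕ}

theorem integral_log_norm_eventuallyEq_of_eq_sub_pow_mul (hε : 0 < ε)
    (hg : ContinuousOn g (Metric.closedBall (α' + I * t₀) (2 * ε)))
    (hgne : ∀ s ∈ Metric.closedBall (α' + I * t₀) (2 * ε), g s ≠ 0)
    (hfac : ∀ s ∈ Metric.closedBall (α' + I * t₀) (2 * ε), f s = (s - (α' + I * t₀)) ^ m * g s) :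
    (fun σ : ℝ => ∫ t in (t₀ - ε)..(t₀ + ε), log ‖f (σ + I * t)‖) =ᶠ[𝓝 α']
      fun σ => m / 2 * (∫ u in (-ε)..ε, log ((σ - α') ^ 2 + u ^ 2)) +
        ∫ t in (t₀ - ε)..(t₀ + ε), log ‖g (σ + I * t)‖ := by
  filter_upwards [Icc_mem_nhds (show α' - ε < α' by linarith) (show α' < α' + ε by linarith)]
    with σ hσ
  have hmem : ∀ t ∈ [[t₀ - ε, t₀ + ε]], (σ : ℂ) + I * t ∈
      Metric.closedBall (α' + I * t₀) (2 * ε) := fun t ht =>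
    reProdIm_Icc_subset_closedBall α' t₀ ε <| ofReal_add_I_mul_mem_reProdIm.2
      ⟨hσ, by rwa [uIcc_of_le (by linarith)] at ht⟩
  rw [integral_log_norm_vertical_eq (fun t ht => hfac _ (hmem t ht))
    (hg.comp (by fun_prop) hmem) (fun t ht => hgne _ (hmem t ht)),
    integral_log_norm_ofReal_add_I_mul_sub]
  ring

theorem integral_re_logDeriv_eq_of_eq_sub_pow_mul (hε : 0 < ε)
    (hg : ∀ s ∈ Metric.closedBall (α' + I * t₀) (2 * ε), DifferentiableAt ℂ g s)
    (hgne : ∀ s ∈ Metric.closedBall (α' + I * t₀) (2 * ε), g s ≠ 0)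
    (hfac : ∀ s ∈ Metric.closedBall (α' + I * t₀) (2 * ε), f s = (s - (α' + I * t₀)) ^ m * g s) :
    ∫ t in (t₀ - ε)..(t₀ + ε), (logDeriv f (α' + I * t)).re =
      ∫ t in (t₀ - ε)..(t₀ + ε), (logDeriv g (α' + I * t)).re := by
  refine integral_congr_ae ?_
  filter_upwards [Measure.ae_ne volume t₀] with t ht htε
  rw [uIoc_of_le (by linarith)] at htε
  have hball : (α' : ℂ) + I * t ∈ Metric.ball (α' + I * t₀) (2 * ε) := by
    rw [Metric.mem_ball, Complex.dist_of_re_eq (by simp), Real.dist_eq]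
    simp only [Complex.add_im, Complex.ofReal_im, Complex.mul_im, Complex.I_re, Complex.I_im,
      Complex.ofReal_re, zero_mul, one_mul, zero_add, abs_lt]
    constructor <;> linarith [htε.1, htε.2]
  have hz := Metric.ball_subset_closedBall hball
  exact re_logDeriv_ofReal_add_I_mul_eq (eventually_of_mem
    (Metric.closedBall_mem_nhds_of_mem hball) hfac) ht (hgne _ hz) (hg _ hz)

end Factorization

open Complex intervalIntegral

theorem one_sided_deriv_log_abs_integral_at_zero_general
    (f g : ℂ → ℂ) (α' t₀ ε : ℝ) (hε : 0 < ε) (m : ℕ)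
    (U : Set ℂ) (hU : IsOpen U)
    (hBU : Metric.closedBall ((α' : ℂ) + Complex.I * (t₀:ℂ)) (2*ε) ⊆ U)
    (hg : DifferentiableOn ℂ g U)
    (hgne : ∀ s ∈ Metric.closedBall ((α' : ℂ) + Complex.I * (t₀:ℂ)) (2*ε), g s ≠ 0)
    (hfac : ∀ s ∈ Metric.closedBall ((α' : ℂ) + Complex.I * (t₀:ℂ)) (2*ε),
      f s = (s - ((α' : ℂ) + Complex.I * (t₀:ℂ)))^m * g s) :
    HasDerivWithinAt
      (fun σ : ℝ => ∫ t in (t₀ - ε)..(t₀ + ε),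
        Real.log ‖f ((σ : ℂ) + Complex.I * (t:ℂ))‖)
      ((m : ℝ) * Real.pi + ∫ t in (t₀ - ε)..(t₀ + ε),
        (deriv f ((α' : ℂ) + Complex.I * (t:ℂ)) /
          f ((α' : ℂ) + Complex.I * (t:ℂ))).re)
      (Set.Ici α') α' ∧
    HasDerivWithinAt
      (fun σ : ℝ => ∫ t in (t₀ - ε)..(t₀ + ε),
        Real.log ‖f ((σ : ℂ) + Complex.I * (t:ℂ))‖)
      (-((m : ℝ) * Real.pi) + ∫ t in (t₀ - ε)..(t₀ + ε),
        (deriv f ((α' : ℂ) + Complex.I * (t:ℂ)) /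
          f ((α' : ℂ) + Complex.I * (t:ℂ))).re)
      (Set.Iic α') α' := by
  have hRB := (uIcc_of_le (show t₀ - ε ≤ t₀ + ε by linarith)).symm ▸
    reProdIm_Icc_subset_closedBall α' t₀ ε
  have hG := hasDerivAt_integral_log_norm_vertical hU hg hε (hRB.trans hBU)
    fun z hz => hgne z (hRB hz)
  have hsplit := integral_log_norm_eventuallyEq_of_eq_sub_pow_mul hε (hg.continuousOn.mono hBU)
    hgne hfac
  have hlogDeriv := integral_re_logDeriv_eq_of_eq_sub_pow_mul hε
    (fun z hz => hg.differentiableAt (hU.mem_nhds (hBU hz))) hgne hfac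
  have hside : ∀ {s t : Set ℝ} {d : ℝ},
      HasDerivWithinAt (fun x : ℝ => x * Real.arctan (ε / x)) d s 0 → MapsTo (· - α') t s →
      HasDerivWithinAt (fun σ : ℝ => ∫ t in (t₀ - ε)..(t₀ + ε), Real.log ‖f (σ + I * t)‖)
        (m * (2 * d) + ∫ t in (t₀ - ε)..(t₀ + ε), (deriv f (α' + I * t) / f (α' + I * t)).re)
        t α' := fun hd hts => by
    refine (((hasDerivWithinAt_integral_log_sq_add_sq hε.ne' hd hts).const_mul (m / 2 : ℝ)).add
      hG.hasDerivWithinAt).congr_of_eventuallyEq (hsplit.filter_mono nhdsWithin_le_nhds)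
      hsplit.eq_of_nhds |>.congr_deriv ?_
    rw [← hlogDeriv]
    simp only [logDeriv_apply]
    ring
  constructor
  · exact (hside (t := Ici α') (hasDerivWithinAt_mul_arctan_div_Ici hε)
      fun σ (hσ : α' ≤ σ) => show 0 ≤ σ - α' by linarith).congr_deriv (by ring)
  · exact (hside (t := Iic α') (hasDerivWithinAt_mul_arctan_div_Iic hε)
      fun σ (hσ : σ ≤ α') => show σ - α' ≤ 0 by linarith).congr_deriv (by ring)

/-- if f has a zero of order m at α'+it₀ and no other zero on the closed
disk D̄(α'+it₀, 2ε) (encoded by the factorization f(s) = (s−α'−it₀)^m g(s) with g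
holomorphic and nonvanishing there), then the one-sided derivatives at σ = α' of
σ ↦ ∫_{t₀−ε}^{t₀+ε} log|f(σ+it)| dt exist and equal
±mπ + ∫_{t₀−ε}^{t₀+ε} Re(f'/f)(α'+it) dt. -/
theorem one_sided_deriv_log_abs_integral_at_zero
    (f g : ℂ → ℂ) (α' t₀ ε : ℝ) (hε : 0 < ε) (m : ℕ) (hm : 0 < m)
    (U : Set ℂ) (hU : IsOpen U)
    (hBU : Metric.closedBall ((α' : ℂ) + Complex.I * (t₀:ℂ)) (2*ε) ⊆ U)
    (hf : DifferentiableOn ℂ f U) (hg : DifferentiableOn ℂ g U)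
    (hgne : ∀ s ∈ Metric.closedBall ((α' : ℂ) + Complex.I * (t₀:ℂ)) (2*ε), g s ≠ 0)
    (hfac : ∀ s ∈ Metric.closedBall ((α' : ℂ) + Complex.I * (t₀:ℂ)) (2*ε),
      f s = (s - ((α' : ℂ) + Complex.I * (t₀:ℂ)))^m * g s) :
    HasDerivWithinAt
      (fun σ : ℝ => ∫ t in (t₀ - ε)..(t₀ + ε),
        Real.log ‖f ((σ : ℂ) + Complex.I * (t:ℂ))‖)
      ((m : ℝ) * Real.pi + ∫ t in (t₀ - ε)..(t₀ + ε),
        (deriv f ((α' : ℂ) + Complex.I * (t:ℂ)) /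
          f ((α' : ℂ) + Complex.I * (t:ℂ))).re)
      (Set.Ici α') α' ∧
    HasDerivWithinAt
      (fun σ : ℝ => ∫ t in (t₀ - ε)..(t₀ + ε),
        Real.log ‖f ((σ : ℂ) + Complex.I * (t:ℂ))‖)
      (-((m : ℝ) * Real.pi) + ∫ t in (t₀ - ε)..(t₀ + ε),
        (deriv f ((α' : ℂ) + Complex.I * (t:ℂ)) /
          f ((α' : ℂ) + Complex.I * (t:ℂ))).re)
      (Set.Iic α') α' :=
  one_sided_deriv_log_abs_integral_at_zero_general f g α' t₀ ε hε m U hU hBU hg hgne hfac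
end

section
/- Let κ : I → ℝ be continuous on an interval I containing 0, define ϑ(u) = ∫_0^u κ(t) dt and g(t) = ∫_0^t exp(i·ϑ(u)) du. Then g : I → ℂ is a C¹ unit-speed curve (|g'(t)| = 1 for all t), and wherever κ is continuous the signed curvature of g at t equals κ(t). -/
open Complex intervalIntegral

/-!
By the fundamental theorem of calculus the turning angle `ϑ` is a real primitive of `κ` and
`g' = exp (i ϑ)`, which is continuous and of modulus one. Differentiating once more by the
chain rule gives `g'' = i ϑ' exp (i ϑ) = i κ g'`.
-/

theorem Continuous.contDiff_one_integral {E : Type*} [NormedAddCommGroup E] [NormedSpace ℝ E]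
    [CompleteSpace E] {f : ℝ → E} (hf : Continuous f) (a : ℝ) :
    ContDiff ℝ 1 fun t => ∫ u in a..t, f u :=
  contDiff_one_iff_deriv.2
    ⟨fun t => (hf.integral_hasStrictDerivAt a t).hasDerivAt.differentiableAt,
      (funext (Continuous.deriv_integral f hf a)).symm ▸ hf⟩

theorem norm_cexp_I_mul_ofReal (x : ℝ) : ‖exp (I * (x : ℂ))‖ = 1 := by
  rw [mul_comm]
  exact norm_exp_ofReal_mul_I x

theorem HasDerivAt.cexp_I_mul_ofReal {θ : ℝ → ℝ} {κ t : ℝ} (h : HasDerivAt θ κ t) :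
    HasDerivAt (fun u => Complex.exp (I * θ u)) (I * κ * Complex.exp (I * θ t)) t := by
  convert (h.ofReal_comp.const_mul I).cexp using 1
  ring

/-- given a continuous curvature function κ, the curve
g(t) = ∫_0^t exp(i ∫_0^u κ) du is a C¹ unit-speed plane curve whose signed curvature
(defined by g'' = i·κ·g') is κ. -/
theorem curve_with_prescribed_curvature (κ : ℝ → ℝ) (hκ : Continuous κ)
    (ϑ g : ℝ → ℂ)
    (hϑ : ϑ = fun u : ℝ => ((∫ x in (0:ℝ)..u, κ x : ℝ) : ℂ))
    (hg : g = fun t : ℝ => ∫ u in (0:ℝ)..t, Complex.exp (Complex.I * ϑ u)) :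
    ContDiff ℝ 1 g ∧
    (∀ t : ℝ, ‖deriv g t‖ = 1) ∧
    (∀ t : ℝ, deriv (deriv g) t = Complex.I * (κ t : ℂ) * deriv g t) := by
  subst hϑ hg
  set θ : ℝ → ℝ := fun u => ∫ x in (0:ℝ)..u, κ x
  have hθ : ∀ u, HasDerivAt θ (κ u) u := fun u => (hκ.integral_hasStrictDerivAt 0 u).hasDerivAt
  have htangent : Continuous fun u => exp (I * θ u) :=
    (continuous_const.mul (continuous_ofReal.comp
      (continuous_iff_continuousAt.2 fun u => (hθ u).continuousAt))).cexp
  have hderiv : deriv (fun t => ∫ u in (0:ℝ)..t, exp (I * θ u)) = fun u => exp (I * θ u) :=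
    funext (Continuous.deriv_integral _ htangent 0)
  refine ⟨htangent.contDiff_one_integral 0, fun t => ?_, fun t => ?_⟩
  · rw [hderiv]
    exact norm_cexp_I_mul_ofReal (θ t)
  · rw [hderiv]
    exact (HasDerivAt.cexp_I_mul_ofReal (hθ t)).deriv
end

section
/- Let σ ∈ (1/2, 1), let I = [a, b] be a compact interval, and let ε > 0. Then the set of τ ≥ 0 such that max_{t∈I} |ζ(σ + i·t + i·τ) − ζ(σ + i·(a + b − t))| < ε has positive lower density. In other words, the time-reversed zeta curve on the segment reappears, up to error ε, within the zeta curve on the line Re s = σ, with positive lower density of shifts. -/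
open Complex MeasureTheory Filter ComplexConjugate

/-! The reversed curve `t ↦ ζ(σ + i(a + b - t))` is the restriction to the vertical segment
`K = σ + i[a, b]` of the continuous function `s ↦ ζ(conj s + i(a + b))`, so it is an admissible
universality target on `K`: a segment of a vertical line in the strip is compact, has empty
interior, and its complement is connected. -/

namespace Complex

open Set

lemma interior_eq_empty_of_subset_re_eq {K : Set ℂ} {σ : ℝ} (hK : K ⊆ {z | z.re = σ}) :
    interior K = ∅ :=
  eq_empty_of_subset_empty <| (interior_mono hK).trans <| by
    rw [← frontier_setOfPred_re_le, interior_frontier (isClosed_le continuous_re continuous_const)]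

lemma isConnected_compl_of_subset_re_eq {K : Set ℂ} {σ b : ℝ} (hK : K ⊆ {z | z.re = σ})
    (hb : ∀ z ∈ K, z.im ≤ b) : IsConnected Kᶜ := by
  have hleft : IsConnected ({z : ℂ | b < z.im} ∪ {z | z.re < σ}) :=
    IsConnected.union ⟨σ - 1 + I * (b + 1), by simp, by simp⟩
      ((convex_halfSpace_im_gt b).isConnected ⟨σ + I * (b + 1), by simp⟩)
      ((convex_halfSpace_re_lt σ).isConnected ⟨σ - 1, by simp⟩)
  -- This part of `Kᶜ` is connected and already dense in `ℂ`.
  have hU : IsConnected ({z : ℂ | b < z.im} ∪ {z | z.re < σ} ∪ {z | σ < z.re}) :=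
    IsConnected.union ⟨σ + 1 + I * (b + 1), Or.inl (by simp), by simp⟩ hleft
      ((convex_halfSpace_re_gt σ).isConnected ⟨σ + 1, by simp⟩)
  refine hU.subset_closure ?_ fun z _ => ?_
  · rintro z ((hz | hz) | hz) hzK
    · exact (hb z hzK).not_gt hz
    · exact hz.ne (hK hzK)
    · exact hz.ne' (hK hzK)
  · rw [closure_union, closure_union, closure_setOfPred_re_lt, closure_setOfPred_lt_re]
    exact (le_total z.re σ).elim (fun h => Or.inl (Or.inr h)) Or.inr

def verticalSegment (σ a b : ℝ) : Set ℂ :=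
  (fun t : ℝ => σ + I * t) '' Icc a b

lemma isCompact_verticalSegment (σ a b : ℝ) : IsCompact (verticalSegment σ a b) :=
  isCompact_Icc.image (by fun_prop)

lemma verticalSegment_subset_re_eq (σ a b : ℝ) : verticalSegment σ a b ⊆ {z | z.re = σ} := by
  rintro _ ⟨t, -, rfl⟩
  simp

lemma im_le_of_mem_verticalSegment {σ a b : ℝ} {z : ℂ} (hz : z ∈ verticalSegment σ a b) :
    z.im ≤ b := by
  obtain ⟨t, ht, rfl⟩ := hz
  simpa using ht.2

lemma continuousOn_riemannZeta_comp {f : ℂ → ℂ} {K : Set ℂ} (hf : ContinuousOn f K)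
    (h1 : ∀ s ∈ K, f s ≠ 1) : ContinuousOn (fun s => riemannZeta (f s)) K :=
  fun s hs => (differentiableAt_riemannZeta (h1 s hs)).continuousAt.comp_continuousWithinAt (hf s hs)

end Complex

theorem reversed_zeta_curve_reappears_general
    (hVoronin : ∀ K : Set ℂ, IsCompact K →
      (∀ s ∈ K, 1/2 < s.re ∧ s.re < 1) →
      IsConnected Kᶜ → interior K = ∅ →
      ∀ h : ℂ → ℂ, ContinuousOn h K → ∀ ε : ℝ, 0 < ε →
        0 < Filter.liminf (fun T : ℝ =>
          (volume {τ : ℝ | τ ∈ Set.Icc (0:ℝ) T ∧ ∀ s ∈ K,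
            ‖riemannZeta (s + Complex.I * (τ:ℂ)) - h s‖ < ε}).toReal / T)
          Filter.atTop)
    (σ a b : ℝ) (hσ₁ : 1/2 < σ) (hσ₂ : σ < 1)
    (ε : ℝ) (hε : 0 < ε) :
    0 < Filter.liminf (fun T : ℝ =>
      (volume {τ : ℝ | τ ∈ Set.Icc (0:ℝ) T ∧ ∀ t ∈ Set.Icc a b,
        ‖riemannZeta ((σ:ℂ) + Complex.I * (t:ℂ) + Complex.I * (τ:ℂ)) -
          riemannZeta ((σ:ℂ) + Complex.I * ((a + b - t : ℝ):ℂ))‖ < ε}).toReal / T)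
      Filter.atTop := by
  set K := verticalSegment σ a b
  have hre : K ⊆ {z | z.re = σ} := verticalSegment_subset_re_eq σ a b
  have hcont : ContinuousOn (fun s => riemannZeta (conj s + I * (a + b : ℝ))) K :=
    continuousOn_riemannZeta_comp (by fun_prop) fun s hs h1 => by
      simpa [show s.re = σ from hre hs, hσ₂.ne] using congrArg re h1
  have hV := hVoronin K (isCompact_verticalSegment σ a b)
    (fun s hs => (show s.re = σ from hre hs) ▸ ⟨hσ₁, hσ₂⟩)
    (isConnected_compl_of_subset_re_eq hre fun _ => im_le_of_mem_verticalSegment)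
    (interior_eq_empty_of_subset_re_eq hre) _ hcont ε hε
  convert hV using 7 with T
  have hreflect : ∀ t : ℝ, conj (σ + I * t) + I * (a + b : ℝ) = σ + I * (a + b - t : ℝ) := by
    intro t; apply Complex.ext <;> simp; ring
  simp only [K, verticalSegment, Set.forall_mem_image, hreflect]

/-- assuming Voronin–Andersson universality (targets with zeros allowed on
compact sets with empty interior), the time-reversed zeta curve
t ↦ ζ(σ + i(a+b−t)) on a segment is approximated, within ε and with positive lower
density of shifts τ, by t ↦ ζ(σ + it + iτ). -/
theorem reversed_zeta_curve_reappears
    (hVoronin : ∀ K : Set ℂ, IsCompact K →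
      (∀ s ∈ K, 1/2 < s.re ∧ s.re < 1) →
      IsConnected Kᶜ → interior K = ∅ →
      ∀ h : ℂ → ℂ, ContinuousOn h K → ∀ ε : ℝ, 0 < ε →
        0 < Filter.liminf (fun T : ℝ =>
          (volume {τ : ℝ | τ ∈ Set.Icc (0:ℝ) T ∧ ∀ s ∈ K,
            ‖riemannZeta (s + Complex.I * (τ:ℂ)) - h s‖ < ε}).toReal / T)
          Filter.atTop)
    (σ a b : ℝ) (hσ₁ : 1/2 < σ) (hσ₂ : σ < 1) (hab : a ≤ b)
    (ε : ℝ) (hε : 0 < ε) :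
    0 < Filter.liminf (fun T : ℝ =>
      (volume {τ : ℝ | τ ∈ Set.Icc (0:ℝ) T ∧ ∀ t ∈ Set.Icc a b,
        ‖riemannZeta ((σ:ℂ) + Complex.I * (t:ℂ) + Complex.I * (τ:ℂ)) -
          riemannZeta ((σ:ℂ) + Complex.I * ((a + b - t : ℝ):ℂ))‖ < ε}).toReal / T)
      Filter.atTop :=
  reversed_zeta_curve_reappears_general hVoronin σ a b hσ₁ hσ₂ ε hε
end
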